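/- arXiv:1804.08650 — 2 statements merged into one kernel-verified Lean document; each statement's English description precedes it below -/
import Mathlib

section
/- Bandwidth equivalence under the modified Cholesky decomposition: let Ω = (I_p − A)ᵀ D⁻¹ (I_p − A), where A = (a_{jl}) is a p×p lower triangular matrix with zero diagonal and D is diagonal with strictly positive diagonal entries. Then for every integer k ≥ 0: a_{jl} = 0 for all pairs (j,l) with j − l > k if and only if Ω_{jl} = 0 for all pairs (j,l) with |j − l| > k. In particular, the bandwidth of A equals the bandwidth of Ω. -/
/-!
With `B = 1 - A`, which is unit lower triangular, `Ω = Bᵀ (D⁻¹ B)` where `Bᵀ` is invertible and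
upper triangular. Left multiplication by an upper triangular matrix keeps every entry more than
`k` below the diagonal zero, and left multiplication by an invertible diagonal matrix neither
creates nor destroys such zeros. So a lower band of `A` passes to `D⁻¹ B` and then to `Ω`, and
conversely a lower band of `Ω` passes to `D⁻¹ B = (Bᵀ)⁻¹ Ω`, hence to `B` and `A`. Since `Ω` is
symmetric, its lower band is its whole band.
-/

open Matrix

namespace Matrix

variable {R : Type*}

section Bandwidth

variable {p : ℕ}

def LowerBandwidthLE [Zero R] (M : Matrix (Fin p) (Fin p) R) (k : ℕ) : Prop :=
  ∀ j l : Fin p, l.val + k < j.val → M j l = 0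

theorem LowerBandwidthLE.isUpperTriangular_mul [NonUnitalNonAssocSemiring R]
    {U M : Matrix (Fin p) (Fin p) R} {k : ℕ} (hU : U.IsUpperTriangular)
    (hM : M.LowerBandwidthLE k) : (U * M).LowerBandwidthLE k := by
  intro j l hjl
  rw [mul_apply]
  refine Finset.sum_eq_zero fun m _ => ?_
  rcases lt_or_ge m j with hmj | hjm
  · rw [hU hmj, zero_mul]
  · rw [hM m l (by omega), mul_zero]

theorem lowerBandwidthLE_diagonal_mul_iff [NonUnitalNonAssocSemiring R] [NoZeroDivisors R]
    {d : Fin p → R} (hd : ∀ i, d i ≠ 0) {M : Matrix (Fin p) (Fin p) R} {k : ℕ} :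
    (diagonal d * M).LowerBandwidthLE k ↔ M.LowerBandwidthLE k := by
  simp only [LowerBandwidthLE, diagonal_mul, mul_eq_zero, hd, false_or]

theorem lowerBandwidthLE_one_sub_iff [AddGroupWithOne R] {A : Matrix (Fin p) (Fin p) R}
    {k : ℕ} : (1 - A).LowerBandwidthLE k ↔ A.LowerBandwidthLE k := by
  refine forall₂_congr fun j l => imp_congr_right fun hjl => ?_
  rw [Matrix.sub_apply, one_apply_ne (Fin.ne_of_val_ne (by omega)), zero_sub, neg_eq_zero]

theorem IsSymm.lowerBandwidthLE_iff [Zero R] {M : Matrix (Fin p) (Fin p) R} (hM : M.IsSymm)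
    {k : ℕ} : M.LowerBandwidthLE k ↔
      ∀ j l : Fin p, l.val + k < j.val ∨ j.val + k < l.val → M j l = 0 := by
  refine ⟨fun h j l hjl => ?_, fun h j l hjl => h j l (.inl hjl)⟩
  rcases hjl with hjl | hlj
  · exact h j l hjl
  · rw [hM.apply l j]
    exact h l j hlj

end Bandwidth

variable {n : Type*} [DecidableEq n]

theorem isSymm_transpose_mul_diagonal_mul [Fintype n] [CommSemiring R] (B : Matrix n n R)
    (d : n → R) : (Bᵀ * diagonal d * B).IsSymm := by
  simp [IsSymm, transpose_mul, Matrix.mul_assoc]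

theorem IsDiag.inv_eq_diagonal [Fintype n] [Field R] {D : Matrix n n R} (hD : D.IsDiag)
    (hD₀ : ∀ i, D i i ≠ 0) : D⁻¹ = diagonal (diag D)⁻¹ := by
  refine inv_eq_left_inv ?_
  rw [← hD.diagonal_diag, diagonal_mul_diagonal, diag_diagonal, ← diagonal_one]
  exact congrArg diagonal (funext fun i => inv_mul_cancel₀ (hD₀ i))

theorem isUpperTriangular_transpose_one_sub [LinearOrder n] [AddGroupWithOne R]
    {A : Matrix n n R} (hA : ∀ j l, j ≤ l → A j l = 0) : (1 - A)ᵀ.IsUpperTriangular :=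
  fun i j (hji : j < i) => by
    rw [transpose_apply, Matrix.sub_apply, one_apply_ne hji.ne, hA j i hji.le, sub_zero]

theorem det_transpose_one_sub [Fintype n] [LinearOrder n] [CommRing R] {A : Matrix n n R}
    (hA : ∀ j l, j ≤ l → A j l = 0) : (1 - A)ᵀ.det = 1 := by
  rw [det_of_isUpperTriangular (isUpperTriangular_transpose_one_sub hA)]
  exact Finset.prod_eq_one fun i _ => by simp [hA i i le_rfl]

end Matrix

/-- **Bandwidth equivalence under the modified Cholesky decomposition.** If
`Ω = (I - A)ᵀ D⁻¹ (I - A)` with `A` lower triangular with zero diagonal and `D` diagonal with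
positive entries, then for every `k ≥ 0` the Cholesky factor `A` has bandwidth at most `k`
(`a_{jl} = 0` whenever `j - l > k`) if and only if `Ω` has bandwidth at most `k`
(`Ω_{jl} = 0` whenever `|j - l| > k`). -/
theorem bandwidth_cholesky_iff (p : ℕ) (A D Ω : Matrix (Fin p) (Fin p) ℝ)
    (hA : ∀ j l : Fin p, j ≤ l → A j l = 0)
    (hDdiag : ∀ j l : Fin p, j ≠ l → D j l = 0)
    (hDpos : ∀ j : Fin p, 0 < D j j)
    (hΩ : Ω = (1 - A)ᵀ * D⁻¹ * (1 - A)) :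
    ∀ k : ℕ,
      (∀ j l : Fin p, l.val + k < j.val → A j l = 0) ↔
      (∀ j l : Fin p, l.val + k < j.val ∨ j.val + k < l.val → Ω j l = 0) := by
  intro k
  set B := 1 - A
  have hDinv : D⁻¹ = diagonal (diag D)⁻¹ :=
    IsDiag.inv_eq_diagonal (D := D) hDdiag fun i => (hDpos i).ne'
  have hd : ∀ i, (diag D)⁻¹ i ≠ 0 := fun i => inv_ne_zero (hDpos i).ne'
  have hBt := isUpperTriangular_transpose_one_sub hA
  have : Invertible Bᵀ := invertibleOfIsUnitDet _ (det_transpose_one_sub hA ▸ isUnit_one)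
  have hΩB : Ω = Bᵀ * (diagonal (diag D)⁻¹ * B) := by rw [hΩ, hDinv, Matrix.mul_assoc]
  have hΩsymm : Ω.IsSymm := by
    rw [hΩ, hDinv]
    exact isSymm_transpose_mul_diagonal_mul B _
  rw [← hΩsymm.lowerBandwidthLE_iff]
  change A.LowerBandwidthLE k ↔ _
  rw [← lowerBandwidthLE_one_sub_iff, ← lowerBandwidthLE_diagonal_mul_iff hd]
  constructor
  · intro hB
    rw [hΩB]
    exact hB.isUpperTriangular_mul hBt
  · intro hΩk
    rw [← inv_mul_cancel_left_of_invertible Bᵀ (diagonal (diag D)⁻¹ * B), ← hΩB]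
    exact hΩk.isUpperTriangular_mul (blockTriangular_inv_of_blockTriangular hBt)
end

section
/- Closed form of the marginal likelihood under the Zellner-type prior: let n > k ≥ 1 be integers, X ∈ ℝ^{n×k} a matrix of rank k, and y ∈ ℝⁿ a vector not lying in the column space of X. Let â = (XᵀX)⁻¹Xᵀy and d̂ = yᵀ(I_n − X(XᵀX)⁻¹Xᵀ)y / n (so d̂ > 0), and let γ > 0 and τ ∈ (0,1). Then ∫₀^∞ d^{τn/2 − 1} [ ∫_{ℝᵏ} (2πd)^{−n/2} exp(−‖y − Xa‖²/(2d)) · (2πd/γ)^{−k/2} det(XᵀX)^{1/2} exp(−(γ/(2d)) (a − â)ᵀ XᵀX (a − â)) da ] dd = (2π)^{−n/2} (1 + 1/γ)^{−k/2} Γ((1−τ)n/2) (n d̂ / 2)^{−(1−τ)n/2}, where Γ denotes the Gamma function and both integrals are with respect to Lebesgue measure. -/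
/-!
Completing the square gives `‖y - Xa‖² = RSS + (a - â)ᵀXᵀX(a - â)` with `RSS = n d̂`, so for fixed
`d` the integrand is Gaussian in `a` with precision `(1 + γ)XᵀX / d`. Integrating `a` out leaves
`(2π)^{-n/2} (1 + 1/γ)^{-k/2} d^{-n/2} exp(-RSS/(2d))`, and the remaining integral over `d` is the
inverse-gamma integral `∫₀^∞ d^{-s-1} e^{-b/d} dd = Γ(s) b^{-s}` with `s = (1-τ)n/2`, `b = RSS/2`.
-/

open MeasureTheory Matrix Real Set

theorem Matrix.mulVec_injective_of_rank_eq {m ι K : Type*} [Fintype ι] [Field K]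
    {X : Matrix m ι K} (hX : X.rank = Fintype.card ι) : Function.Injective X.mulVec := by
  have hker : Module.finrank K (LinearMap.ker X.mulVecLin) = 0 := by
    have := LinearMap.finrank_range_add_finrank_ker X.mulVecLin
    rw [Module.finrank_fintype_fun_eq_card] at this
    change X.rank + _ = _ at this
    omega
  rw [Submodule.finrank_eq_zero, LinearMap.ker_eq_bot] at hker
  exact hker

theorem Matrix.posDef_transpose_mul_self_of_rank_eq {m ι : Type*} [Fintype m] [Fintype ι]
    {X : Matrix m ι ℝ} (hX : X.rank = Fintype.card ι) : (Xᵀ * X).PosDef := by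
  simpa using PosDef.conjTranspose_mul_self X (mulVec_injective_of_rank_eq hX)

theorem Matrix.integral_comp_mulVec {ι E : Type*} [Fintype ι] [DecidableEq ι]
    [NormedAddCommGroup E] [NormedSpace ℝ E] {M : Matrix ι ι ℝ} (hM : M.det ≠ 0)
    (f : (ι → ℝ) → E) : ∫ q, f (M *ᵥ q) = |M.det|⁻¹ • ∫ q, f q := by
  have hemb : MeasurableEmbedding (toLin' M) :=
    (toLin' M).continuous_of_finiteDimensional.measurableEmbedding
      (mulVec_injective_iff_isUnit.mpr ((isUnit_iff_isUnit_det M).mpr hM.isUnit))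
  change ∫ q, f (toLin' M q) = _
  rw [← hemb.integral_map, Real.map_matrix_volume_pi_eq_smul_volume_pi hM,
    integral_smul_measure, ENNReal.toReal_ofReal (abs_nonneg _), abs_inv]

theorem integral_exp_neg_mul_sum_sq {ι : Type*} [Fintype ι] {c : ℝ} (hc : 0 < c) :
    ∫ q : ι → ℝ, rexp (-(c * ∑ i, q i ^ 2)) = (π / c) ^ ((Fintype.card ι : ℝ) / 2) := by
  have hnorm (q : ι → ℝ) : c * ∑ i, q i ^ 2 = c * ‖WithLp.toLp 2 q‖ ^ 2 := by
    simp [EuclideanSpace.norm_sq_eq]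
  simp_rw [hnorm, ← neg_mul]
  rw [(PiLp.volume_preserving_toLp ι).integral_comp
      (MeasurableEquiv.toLp 2 (ι → ℝ)).measurableEmbedding fun v => rexp (-c * ‖v‖ ^ 2),
    GaussianFourier.integral_rexp_neg_mul_sq_norm hc, finrank_euclideanSpace]

open scoped MatrixOrder in
theorem Matrix.PosDef.integral_exp_neg_mul_dotProduct_mulVec {ι : Type*} [Fintype ι]
    [DecidableEq ι] {S : Matrix ι ι ℝ} (hS : S.PosDef) {c : ℝ} (hc : 0 < c) :
    ∫ q, rexp (-(c * (q ⬝ᵥ S *ᵥ q))) = (π / c) ^ ((Fintype.card ι : ℝ) / 2) / √S.det := by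
  obtain ⟨B, rfl⟩ := CStarAlgebra.nonneg_iff_eq_star_mul_self.mp hS.posSemidef.nonneg
  have hdet : (star B * B).det = B.det ^ 2 := by
    rw [det_mul, star_eq_conjTranspose, det_conjTranspose, star_trivial, sq]
  have hB : B.det ≠ 0 := fun h => hS.det_pos.ne' (by rw [hdet, h, sq, zero_mul])
  have hquad (q : ι → ℝ) : q ⬝ᵥ (star B * B) *ᵥ q = ∑ i, (B *ᵥ q) i ^ 2 := by
    rw [← mulVec_mulVec, dotProduct_mulVec, star_eq_conjTranspose,
      conjTranspose_eq_transpose_of_trivial, vecMul_transpose]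
    simp [dotProduct, sq]
  simp_rw [hquad]
  rw [integral_comp_mulVec hB fun v => rexp (-(c * ∑ i, v i ^ 2)),
    integral_exp_neg_mul_sum_sq hc, hdet, sqrt_sq_eq_abs, smul_eq_mul, inv_mul_eq_div]

theorem integral_rpow_neg_sub_one_mul_exp_neg_div_Ioi {s b : ℝ} (hs : 0 < s) (hb : 0 < b) :
    ∫ x in Ioi (0 : ℝ), x ^ (-s - 1) * rexp (-(b / x)) = Gamma s * b ^ (-s) := by
  have hinv := integral_comp_rpow_Ioi (fun x => x ^ (s - 1) * rexp (-(b * x)))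
    (p := -1) (by norm_num)
  have hpoint : ∀ x ∈ Ioi (0 : ℝ), (|(-1 : ℝ)| * x ^ (-1 - 1 : ℝ)) •
      ((x ^ (-1 : ℝ)) ^ (s - 1) * rexp (-(b * x ^ (-1 : ℝ)))) =
        x ^ (-s - 1) * rexp (-(b / x)) := by
    intro x hx
    rw [abs_neg, abs_one, one_mul, smul_eq_mul, ← rpow_mul hx.le, ← mul_assoc,
      ← rpow_add hx, rpow_neg_one, ← div_eq_mul_inv]
    ring_nf
  rw [setIntegral_congr_fun measurableSet_Ioi hpoint] at hinv
  rw [hinv, integral_rpow_mul_exp_neg_mul_Ioi hs hb, one_div, inv_rpow hb.le, ← rpow_neg hb.le,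
    mul_comm]

section LeastSquares

variable {m ι : Type*} [Fintype m] [Fintype ι] [DecidableEq ι]

noncomputable def leastSquaresEstimate (X : Matrix m ι ℝ) (y : m → ℝ) : ι → ℝ :=
  (Xᵀ * X)⁻¹ *ᵥ (Xᵀ *ᵥ y)

/-- `yᵀ(I - X(XᵀX)⁻¹Xᵀ)y`, which is `n d̂` in the paper's notation. -/
noncomputable def residualSumSquares (X : Matrix m ι ℝ) (y : m → ℝ) : ℝ :=
  y ⬝ᵥ y - (Xᵀ *ᵥ y) ⬝ᵥ leastSquaresEstimate X y

theorem mulVec_leastSquaresEstimate {X : Matrix m ι ℝ} (hX : IsUnit (Xᵀ * X).det)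
    (y : m → ℝ) : (Xᵀ * X) *ᵥ leastSquaresEstimate X y = Xᵀ *ᵥ y := by
  rw [leastSquaresEstimate, mulVec_mulVec, mul_nonsing_inv _ hX, one_mulVec]

theorem sum_sq_sub_mulVec_eq {X : Matrix m ι ℝ} (hX : IsUnit (Xᵀ * X).det) (y : m → ℝ)
    (a : ι → ℝ) :
    ∑ i, (y i - (X *ᵥ a) i) ^ 2 = residualSumSquares X y +
      (a - leastSquaresEstimate X y) ⬝ᵥ (Xᵀ * X) *ᵥ (a - leastSquaresEstimate X y) := by
  set â := leastSquaresEstimate X y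
  have hnormal : (Xᵀ * X) *ᵥ â = Xᵀ *ᵥ y := mulVec_leastSquaresEstimate hX y
  have hgram (u v : ι → ℝ) : u ⬝ᵥ (Xᵀ * X) *ᵥ v = (X *ᵥ u) ⬝ᵥ (X *ᵥ v) := by
    rw [← mulVec_mulVec, dotProduct_mulVec, vecMul_transpose]
  have hcross (v : ι → ℝ) : y ⬝ᵥ X *ᵥ v = v ⬝ᵥ Xᵀ *ᵥ y := by
    rw [dotProduct_mulVec, mulVec_transpose, dotProduct_comm]
  have hsym : â ⬝ᵥ (Xᵀ * X) *ᵥ a = a ⬝ᵥ Xᵀ *ᵥ y := by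
    rw [hgram, dotProduct_comm, ← hgram, hnormal]
  have hresidual : ∑ i, (y i - (X *ᵥ a) i) ^ 2 =
      y ⬝ᵥ y - 2 * (a ⬝ᵥ Xᵀ *ᵥ y) + a ⬝ᵥ (Xᵀ * X) *ᵥ a := by
    have hdot : ∑ i, (y i - (X *ᵥ a) i) ^ 2 = (y - X *ᵥ a) ⬝ᵥ (y - X *ᵥ a) := by
      simp [dotProduct, sq]
    rw [hdot, sub_dotProduct, dotProduct_sub, dotProduct_sub, dotProduct_comm (X *ᵥ a) y,
      hcross, hgram]
    ring
  have hquad : (a - â) ⬝ᵥ (Xᵀ * X) *ᵥ (a - â) =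
      a ⬝ᵥ (Xᵀ * X) *ᵥ a - 2 * (a ⬝ᵥ Xᵀ *ᵥ y) + â ⬝ᵥ Xᵀ *ᵥ y := by
    rw [mulVec_sub, hnormal, sub_dotProduct, dotProduct_sub, dotProduct_sub, hsym]
    ring
  rw [hresidual, hquad, residualSumSquares, dotProduct_comm (Xᵀ *ᵥ y)]
  ring

theorem residualSumSquares_pos {X : Matrix m ι ℝ} (hX : IsUnit (Xᵀ * X).det) {y : m → ℝ}
    (hy : ∀ a, y ≠ X *ᵥ a) : 0 < residualSumSquares X y := by
  have hfit := sum_sq_sub_mulVec_eq hX y (leastSquaresEstimate X y)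
  rw [sub_self, zero_dotProduct, add_zero] at hfit
  obtain ⟨i, hi⟩ := Function.ne_iff.mp (hy (leastSquaresEstimate X y))
  rw [← hfit]
  exact Finset.sum_pos' (fun _ _ => sq_nonneg _)
    ⟨i, Finset.mem_univ i, sq_pos_of_ne_zero (sub_ne_zero.mpr hi)⟩

theorem integral_gaussian_likelihood_mul_zellner_prior {X : Matrix m ι ℝ}
    (hX : (Xᵀ * X).PosDef) (y : m → ℝ) {γ d : ℝ} (hγ : 0 < γ) (hd : 0 < d) :
    ∫ a : ι → ℝ,
      (2 * π * d) ^ (-(Fintype.card m : ℝ) / 2) *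
        rexp (-(∑ i, (y i - (X *ᵥ a) i) ^ 2) / (2 * d)) *
      ((2 * π * d / γ) ^ (-(Fintype.card ι : ℝ) / 2) * √(Xᵀ * X).det *
        rexp (-(γ / (2 * d)) * ((a - leastSquaresEstimate X y) ⬝ᵥ
          (Xᵀ * X) *ᵥ (a - leastSquaresEstimate X y)))) =
    (2 * π) ^ (-(Fintype.card m : ℝ) / 2) * (1 + 1 / γ) ^ (-(Fintype.card ι : ℝ) / 2) *
      (d ^ (-(Fintype.card m : ℝ) / 2) * rexp (-(residualSumSquares X y / 2 / d))) := by
  set S := Xᵀ * X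
  set â := leastSquaresEstimate X y
  set R := residualSumSquares X y
  set c := (1 + γ) / (2 * d)
  have hc : 0 < c := by positivity
  have hsplit (Q : ℝ) : rexp (-(R + Q) / (2 * d)) * rexp (-(γ / (2 * d)) * Q) =
      rexp (-(R / 2 / d)) * rexp (-(c * Q)) := by
    rw [← exp_add, ← exp_add, div_div]
    congr 1
    simp only [c]
    field_simp
    ring
  have hprior : (2 * π * d / γ) ^ (-(Fintype.card ι : ℝ) / 2) *
      (π / c) ^ ((Fintype.card ι : ℝ) / 2) = (1 + 1 / γ) ^ (-(Fintype.card ι : ℝ) / 2) := by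
    have hu : 0 < 2 * π * d / γ := by positivity
    have hv : 0 < π / c := by positivity
    have hbase : 2 * π * d / γ / (π / c) = 1 + 1 / γ := by
      simp only [c]
      field_simp
      ring
    rw [← hbase, neg_div, rpow_neg hu.le, rpow_neg (div_pos hu hv).le, div_rpow hu.le hv.le,
      inv_div]
    ring
  calc _ = ∫ a : ι → ℝ, (2 * π * d) ^ (-(Fintype.card m : ℝ) / 2) *
        ((2 * π * d / γ) ^ (-(Fintype.card ι : ℝ) / 2) * √S.det) * rexp (-(R / 2 / d)) *
        rexp (-(c * ((a - â) ⬝ᵥ S *ᵥ (a - â)))) := by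
        refine integral_congr_ae (.of_forall fun a => ?_)
        simp only [sum_sq_sub_mulVec_eq hX.det_pos.ne'.isUnit y a]
        linear_combination (2 * π * d) ^ (-(Fintype.card m : ℝ) / 2) *
          ((2 * π * d / γ) ^ (-(Fintype.card ι : ℝ) / 2) * √S.det) * hsplit _
    _ = (2 * π * d) ^ (-(Fintype.card m : ℝ) / 2) *
        ((2 * π * d / γ) ^ (-(Fintype.card ι : ℝ) / 2) * √S.det) * rexp (-(R / 2 / d)) *
        ((π / c) ^ ((Fintype.card ι : ℝ) / 2) / √S.det) := by
        rw [integral_const_mul,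
          integral_sub_right_eq_self (fun q => rexp (-(c * (q ⬝ᵥ S *ᵥ q)))),
          hX.integral_exp_neg_mul_dotProduct_mulVec hc]
    _ = _ := by
        have hdet : √S.det ≠ 0 := (sqrt_pos.mpr hX.det_pos).ne'
        rw [mul_rpow (by positivity) hd.le, ← hprior]
        field_simp

end LeastSquares

theorem zellner_marginal_likelihood_general (n k : ℕ) (hkn : k < n)
    (X : Matrix (Fin n) (Fin k) ℝ) (hX : X.rank = k)
    (y : Fin n → ℝ) (hy : ∀ a : Fin k → ℝ, y ≠ X *ᵥ a)
    (γ τ : ℝ) (hγ : 0 < γ) (hτ1 : τ < 1) :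
    (∫ d in Set.Ioi (0 : ℝ), d ^ (τ * (n : ℝ) / 2 - 1) *
      ∫ a : Fin k → ℝ,
        (2 * π * d) ^ (-(n : ℝ) / 2) *
          Real.exp (-(∑ i, (y i - (X *ᵥ a) i) ^ 2) / (2 * d)) *
        ((2 * π * d / γ) ^ (-(k : ℝ) / 2) * Real.sqrt (Xᵀ * X).det *
          Real.exp (-(γ / (2 * d)) *
            ((fun i => a i - ((Xᵀ * X)⁻¹ *ᵥ (Xᵀ *ᵥ y)) i) ⬝ᵥ
              ((Xᵀ * X) *ᵥ fun i => a i - ((Xᵀ * X)⁻¹ *ᵥ (Xᵀ *ᵥ y)) i))))) =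
    (2 * π) ^ (-(n : ℝ) / 2) * (1 + 1 / γ) ^ (-(k : ℝ) / 2) *
      Real.Gamma ((1 - τ) * (n : ℝ) / 2) *
      ((n : ℝ) * ((y ⬝ᵥ y - (Xᵀ *ᵥ y) ⬝ᵥ ((Xᵀ * X)⁻¹ *ᵥ (Xᵀ *ᵥ y))) / (n : ℝ)) / 2) ^
        (-((1 - τ) * (n : ℝ)) / 2) := by
  have hS : (Xᵀ * X).PosDef := posDef_transpose_mul_self_of_rank_eq (by rwa [Fintype.card_fin])
  have hR : 0 < residualSumSquares X y := residualSumSquares_pos hS.det_pos.ne'.isUnit hy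
  have hn : (0 : ℝ) < n := by exact_mod_cast Nat.zero_lt_of_lt hkn
  have hs : 0 < (1 - τ) * n / 2 := by
    have : 0 < 1 - τ := sub_pos.mpr hτ1
    positivity
  calc _ = ∫ d in Ioi (0 : ℝ), (2 * π) ^ (-(n : ℝ) / 2) * (1 + 1 / γ) ^ (-(k : ℝ) / 2) *
        (d ^ (-((1 - τ) * n / 2) - 1) * rexp (-(residualSumSquares X y / 2 / d))) := by
        refine setIntegral_congr_fun measurableSet_Ioi fun d (hd : 0 < d) => ?_
        have hinner := integral_gaussian_likelihood_mul_zellner_prior hS y hγ hd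
        simp only [Fintype.card_fin] at hinner
        have hpow : d ^ (τ * n / 2 - 1) * d ^ (-(n : ℝ) / 2) = d ^ (-((1 - τ) * n / 2) - 1) := by
          rw [← rpow_add hd]
          ring_nf
        refine (congrArg (d ^ (τ * n / 2 - 1) * ·) hinner).trans ?_
        rw [← hpow]
        ring
    _ = _ := by
        rw [integral_const_mul, integral_rpow_neg_sub_one_mul_exp_neg_div_Ioi hs (half_pos hR),
          mul_div_cancel₀ _ hn.ne', neg_div 2 ((1 - τ) * (n : ℝ)), ← mul_assoc]
        rfl

/-- **Closed form of the marginal likelihood under the Zellner-type prior.** For a design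
matrix `X ∈ ℝ^{n×k}` of full column rank and a response `y` outside the column space of `X`,
with `â = (XᵀX)⁻¹Xᵀy` and `d̂ = yᵀ(I - X(XᵀX)⁻¹Xᵀ)y/n`,
`∫₀^∞ d^{τn/2-1} ∫ N_n(Xa, dI)(y) ⋅ N_k(â, (d/γ)(XᵀX)⁻¹)(a) da dd
  = (2π)^{-n/2} (1+1/γ)^{-k/2} Γ((1-τ)n/2) (n d̂/2)^{-(1-τ)n/2}`. -/
theorem zellner_marginal_likelihood (n k : ℕ) (hk : 1 ≤ k) (hkn : k < n)
    (X : Matrix (Fin n) (Fin k) ℝ) (hX : X.rank = k)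
    (y : Fin n → ℝ) (hy : ∀ a : Fin k → ℝ, y ≠ X *ᵥ a)
    (γ τ : ℝ) (hγ : 0 < γ) (hτ0 : 0 < τ) (hτ1 : τ < 1) :
    (∫ d in Set.Ioi (0 : ℝ), d ^ (τ * (n : ℝ) / 2 - 1) *
      ∫ a : Fin k → ℝ,
        (2 * π * d) ^ (-(n : ℝ) / 2) *
          Real.exp (-(∑ i, (y i - (X *ᵥ a) i) ^ 2) / (2 * d)) *
        ((2 * π * d / γ) ^ (-(k : ℝ) / 2) * Real.sqrt (Xᵀ * X).det *
          Real.exp (-(γ / (2 * d)) *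
            ((fun i => a i - ((Xᵀ * X)⁻¹ *ᵥ (Xᵀ *ᵥ y)) i) ⬝ᵥ
              ((Xᵀ * X) *ᵥ fun i => a i - ((Xᵀ * X)⁻¹ *ᵥ (Xᵀ *ᵥ y)) i))))) =
    (2 * π) ^ (-(n : ℝ) / 2) * (1 + 1 / γ) ^ (-(k : ℝ) / 2) *
      Real.Gamma ((1 - τ) * (n : ℝ) / 2) *
      ((n : ℝ) * ((y ⬝ᵥ y - (Xᵀ *ᵥ y) ⬝ᵥ ((Xᵀ * X)⁻¹ *ᵥ (Xᵀ *ᵥ y))) / (n : ℝ)) / 2) ^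
        (-((1 - τ) * (n : ℝ)) / 2) :=
  zellner_marginal_likelihood_general n k hkn X hX y hy γ τ hγ hτ1
end
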